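/- arXiv:1011.2244 — 2 statements merged into one kernel-verified Lean document; each statement's English description precedes it below -/
import Mathlib

section
/- The family of new Lax–Oleinik operators is a one-parameter semigroup: for all t, s ≥ 0 and every continuous ℤ^d-periodic function u : ℝ^d → ℝ, T̃^a_{t+s} u = T̃^a_t ( T̃^a_s u ). -/
open Set Filter

noncomputable section

/-- Euclidean space `ℝ^d`. -/
abbrev Ed (d : ℕ) := EuclideanSpace ℝ (Fin d)

/-- The vector in `ℝ^d` with integer coordinates `k`. -/
def intVec (d : ℕ) (k : Fin d → ℤ) : Ed d := WithLp.toLp 2 (fun i => (k i : ℝ))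

/-- `u : ℝ^d → ℝ` is `ℤ^d`-periodic. -/
def IsZdPeriodic {d : ℕ} (u : Ed d → ℝ) : Prop :=
  ∀ (x : Ed d) (k : Fin d → ℤ), u (x + intVec d k) = u x

/-- `γ` is continuous and piecewise `C¹` on `[a, b]`. -/
def PiecewiseC1On {d : ℕ} (γ : ℝ → Ed d) (a b : ℝ) : Prop :=
  ContinuousOn γ (Set.Icc a b) ∧
  ∃ (n : ℕ) (T : Fin (n + 1) → ℝ), T 0 = a ∧ T (Fin.last n) = b ∧ Monotone T ∧
    ∀ i : Fin n, ContDiffOn ℝ 1 γ (Set.Icc (T i.castSucc) (T i.succ))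

/-- The standing hypotheses on the autonomous Tonelli Lagrangian `La`:
`C²` smoothness, `ℤ^d`-periodicity in `x`, positive definiteness of the Hessian
`∂²La/∂v²`, and superlinear growth in `v`. -/
def TonelliAut {d : ℕ} (La : Ed d → Ed d → ℝ) : Prop :=
  ContDiff ℝ 2 (fun p : Ed d × Ed d => La p.1 p.2) ∧
  (∀ (x v : Ed d) (k : Fin d → ℤ), La (x + intVec d k) v = La x v) ∧
  (∀ x v w : Ed d, w ≠ 0 → 0 < iteratedFDeriv ℝ 2 (fun v' => La x v') v ![w, w]) ∧
  (∀ A : ℝ, 0 ≤ A → ∃ B : ℝ, ∀ x v : Ed d, A * ‖v‖ - B ≤ La x v)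

/-- The action of the curve `γ : [a,b] → ℝ^d` for the autonomous Lagrangian `La`. -/
def actionA {d : ℕ} (La : Ed d → Ed d → ℝ) (γ : ℝ → Ed d) (a b : ℝ) : ℝ :=
  ∫ s in a..b, La (γ s) (deriv γ s)

/-- The Lax–Oleinik semigroup `Tᵃ_t u (x)`: `Tᵃ_0 u = u` and, for `t > 0`, the infimum of
`u(γ(0)) + ∫₀^t La(γ,γ') ds` over continuous piecewise `C¹` curves ending at `x`. -/
def LOa {d : ℕ} (La : Ed d → Ed d → ℝ) (u : Ed d → ℝ) (t : ℝ) (x : Ed d) : ℝ :=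
  if t = 0 then u x
  else sInf {r | ∃ γ : ℝ → Ed d, PiecewiseC1On γ 0 t ∧ γ t = x ∧
    r = u (γ 0) + actionA La γ 0 t}

/-- The new Lax–Oleinik operator `T̃ᵃ_t u (x) = inf_{σ ∈ [t,2t]} Tᵃ_σ u (x)`. -/
def LOnew {d : ℕ} (La : Ed d → Ed d → ℝ) (u : Ed d → ℝ) (t : ℝ) (x : Ed d) : ℝ :=
  sInf {r | ∃ σ : ℝ, t ≤ σ ∧ σ ≤ 2 * t ∧ r = LOa La u σ x}

/-!
Both sides are infima of `Tᵃ_ρ u (x)` over the same times `ρ`. Cutting a curve of duration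
`τ + σ` at time `τ` gives `Tᵃ_σ (Tᵃ_τ u) ≤ Tᵃ_{τ+σ} u`, and concatenating a curve of duration
`τ` with one of duration `σ` gives the reverse inequality along curves. Taking infima over
`τ ∈ [s, 2s]` and `σ ∈ [t, 2t]`, whose sums `τ + σ` fill exactly `[t + s, 2(t + s)]`, yields the two
inequalities. All infima are finite because `La` is bounded below and `u`, being continuous and
periodic, is bounded below; this matters since `sInf` of a set of reals unbounded below is `0`.
-/

open MeasureTheory Function

variable {d : ℕ}

section Curves

variable {γ γ' : ℝ → Ed d} {a b c : ℝ}

-- Partitions indexed by `ℕ` can be concatenated and iterated over without `Fin` casts.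
theorem piecewiseC1On_iff_nat :
    PiecewiseC1On γ a b ↔ ContinuousOn γ (Icc a b) ∧ ∃ (n : ℕ) (T : ℕ → ℝ), T 0 = a ∧ T n = b ∧
      Monotone T ∧ ∀ i < n, ContDiffOn ℝ 1 γ (Icc (T i) (T (i + 1))) := by
  refine and_congr_right fun _ => ⟨?_, ?_⟩
  · rintro ⟨n, T, h0, hn, hT, hγ⟩
    refine ⟨n, fun i => T ⟨min i n, by omega⟩, by simpa using h0, by simpa [Fin.last] using hn,
      fun i j hij => hT (by simpa [Fin.le_def] using min_le_min_right n hij), fun i hi => ?_⟩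
    simpa [min_eq_left hi.le, min_eq_left (Nat.succ_le_of_lt hi)] using hγ ⟨i, hi⟩
  · rintro ⟨n, T, h0, hn, hT, hγ⟩
    exact ⟨n, fun i => T i, h0, hn, fun i j hij => hT hij, fun i => hγ i i.isLt⟩

theorem PiecewiseC1On.le (h : PiecewiseC1On γ a b) : a ≤ b := by
  obtain ⟨-, n, T, rfl, rfl, hT, -⟩ := h
  exact hT (Fin.zero_le _)

theorem piecewiseC1On_const (x : Ed d) (hab : a ≤ b) : PiecewiseC1On (fun _ => x) a b :=
  piecewiseC1On_iff_nat.2 ⟨continuousOn_const, 1, fun i => if i = 0 then a else b, rfl, rfl,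
    monotone_nat_of_le_succ fun i => by split_ifs <;> simp_all, fun _ _ => contDiffOn_const⟩

theorem PiecewiseC1On.congr (h : PiecewiseC1On γ a b) (he : EqOn γ γ' (Icc a b)) :
    PiecewiseC1On γ' a b := by
  obtain ⟨hc, n, T, rfl, rfl, hT, hγ⟩ := h
  refine ⟨hc.congr he.symm, n, T, rfl, rfl, hT, fun i => (hγ i).congr fun s hs => (he ?_).symm⟩
  exact ⟨(hT (Fin.zero_le _)).trans hs.1, hs.2.trans (hT (Fin.le_last _))⟩

theorem PiecewiseC1On.comp_add_const (h : PiecewiseC1On γ a b) (c : ℝ) :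
    PiecewiseC1On (fun s => γ (s + c)) (a - c) (b - c) := by
  obtain ⟨hc, n, T, rfl, rfl, hT, hγ⟩ := h
  have hmaps : ∀ p q : ℝ, MapsTo (· + c) (Icc (p - c) (q - c)) (Icc p q) := fun p q s hs =>
    ⟨by linarith [hs.1], by linarith [hs.2]⟩
  exact ⟨hc.comp (continuous_add_const c).continuousOn (hmaps _ _), n, fun i => T i - c, rfl, rfl,
    fun i j hij => sub_le_sub_right (hT hij) c,
    fun i => (hγ i).comp (contDiff_id.add contDiff_const).contDiffOn (hmaps _ _)⟩

theorem PiecewiseC1On.trans (h₁ : PiecewiseC1On γ a b) (h₂ : PiecewiseC1On γ b c) :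
    PiecewiseC1On γ a c := by
  have hab := h₁.le
  have hbc := h₂.le
  obtain ⟨hc₁, n₁, T₁, rfl, rfl, hT₁, hγ₁⟩ := piecewiseC1On_iff_nat.1 h₁
  obtain ⟨hc₂, n₂, T₂, h₂0, rfl, hT₂, hγ₂⟩ := piecewiseC1On_iff_nat.1 h₂
  set T : ℕ → ℝ := fun i => if i ≤ n₁ then T₁ i else T₂ (i - n₁)
  have hT_left : ∀ i ≤ n₁, T i = T₁ i := fun i hi => if_pos hi
  have hT_right : ∀ i, n₁ ≤ i → T i = T₂ (i - n₁) := by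
    intro i hi
    rcases hi.eq_or_lt with rfl | hi
    · simp [T, h₂0]
    · exact if_neg (by omega)
  refine piecewiseC1On_iff_nat.2 ⟨?_, n₁ + n₂, T, hT_left 0 (Nat.zero_le _), by
    rw [hT_right _ (by omega), Nat.add_sub_cancel_left], monotone_nat_of_le_succ fun i => ?_,
    fun i hi => ?_⟩
  · rw [← Icc_union_Icc_eq_Icc hab hbc]
    exact hc₁.union_of_isClosed hc₂ isClosed_Icc isClosed_Icc
  · rcases le_or_gt n₁ i with hi | hi
    · rw [hT_right i hi, hT_right (i + 1) (by omega), Nat.sub_add_comm hi]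
      exact hT₂ (Nat.le_succ _)
    · rw [hT_left i hi.le, hT_left (i + 1) hi]
      exact hT₁ (Nat.le_succ _)
  · rcases le_or_gt n₁ i with hi | hi
    · rw [hT_right i hi, hT_right (i + 1) (by omega), Nat.sub_add_comm hi]
      exact hγ₂ _ (by omega)
    · rw [hT_left i hi.le, hT_left (i + 1) hi]
      exact hγ₁ i hi

theorem PiecewiseC1On.mono {a' b' : ℝ} (h : PiecewiseC1On γ a b) (ha : a ≤ a') (hab' : a' ≤ b')
    (hb : b' ≤ b) : PiecewiseC1On γ a' b' := by
  obtain ⟨hc, n, T, rfl, rfl, hT, hγ⟩ := piecewiseC1On_iff_nat.1 h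
  refine piecewiseC1On_iff_nat.2 ⟨hc.mono (Icc_subset_Icc ha hb), n,
    fun i => max a' (min (T i) b'), by simp [ha], by simp [hb, hab'],
    fun i j hij => max_le_max le_rfl (min_le_min_right _ (hT hij)), fun i hi => ?_⟩
  have hle : T i ≤ T (i + 1) := hT (Nat.le_succ i)
  by_cases hin : a' ≤ T (i + 1) ∧ T i ≤ b'
  · refine (hγ i hi).mono (Icc_subset_Icc ?_ ?_) <;> simp [hin.1, hin.2]
  · have hpt : max a' (min (T i) b') = max a' (min (T (i + 1)) b') := by
      simp only [not_and_or, not_le] at hin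
      rcases hin with hin | hin
      · rw [max_eq_left (min_le_of_left_le (by linarith)), max_eq_left (min_le_of_left_le hin.le)]
      · rw [min_eq_right hin.le, min_eq_right (by linarith)]
    simp only [hpt, Icc_self]
    exact fun s hs => hs ▸ contDiffWithinAt_singleton

end Curves

section Action

variable {La : Ed d → Ed d → ℝ} {γ γ' : ℝ → Ed d} {a b c : ℝ}

theorem PiecewiseC1On.intervalIntegrable_lagrangian (hL : Continuous (uncurry La))
    (h : PiecewiseC1On γ a b) :
    IntervalIntegrable (fun s => La (γ s) (deriv γ s)) volume a b := by
  obtain ⟨-, n, T, rfl, rfl, hT, hγ⟩ := piecewiseC1On_iff_nat.1 h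
  refine IntervalIntegrable.trans_iterate fun i hi => ?_
  rcases (hT (Nat.le_succ i)).eq_or_lt with heq | hlt
  · simp [heq]
  have hderiv := (hγ i hi).continuousOn_derivWithin (uniqueDiffOn_Icc hlt) le_rfl
  refine ((hL.comp_continuousOn ((hγ i hi).continuousOn.prodMk hderiv)).intervalIntegrable_of_Icc
    hlt.le).congr_uIoo fun s hs => ?_
  rw [uIoo_of_le hlt.le] at hs
  simp [derivWithin_of_mem_nhds (Icc_mem_nhds hs.1 hs.2)]

theorem actionA_add (hL : Continuous (uncurry La)) (h₁ : PiecewiseC1On γ a b)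
    (h₂ : PiecewiseC1On γ b c) : actionA La γ a b + actionA La γ b c = actionA La γ a c :=
  intervalIntegral.integral_add_adjacent_intervals (h₁.intervalIntegrable_lagrangian hL)
    (h₂.intervalIntegrable_lagrangian hL)

theorem actionA_congr (hab : a ≤ b) (h : EqOn γ γ' (Ioo a b)) :
    actionA La γ a b = actionA La γ' a b :=
  intervalIntegral.integral_congr_Ioo_of_le hab fun s hs => by
    rw [(h.eventuallyEq_of_mem (Ioo_mem_nhds hs.1 hs.2)).deriv_eq, h hs]

theorem actionA_comp_add_const (c : ℝ) :
    actionA La (fun s => γ (s + c)) a b = actionA La γ (a + c) (b + c) := by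
  simp only [actionA, deriv_comp_add_const]
  exact intervalIntegral.integral_comp_add_right (fun s => La (γ s) (deriv γ s)) c

theorem neg_mul_le_actionA {B : ℝ} (hB : 0 ≤ B) (hL : ∀ x v, -B ≤ La x v) (hab : a ≤ b) :
    -B * (b - a) ≤ actionA La γ a b := by
  by_cases hint : IntervalIntegrable (fun s => La (γ s) (deriv γ s)) volume a b
  · simpa [actionA, mul_comm] using
      intervalIntegral.integral_mono_on hab intervalIntegrable_const hint
        fun s _ => hL (γ s) (deriv γ s)
  · rw [actionA, intervalIntegral.integral_undef hint]
    nlinarith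

end Action

section Concat

variable {La : Ed d → Ed d → ℝ} {γ₁ γ₂ : ℝ → Ed d} {τ σ : ℝ}

def concatAt (τ : ℝ) (γ₁ γ₂ : ℝ → Ed d) (s : ℝ) : Ed d :=
  if s ≤ τ then γ₁ s else γ₂ (s - τ)

theorem concatAt_eqOn_Iic : EqOn (concatAt τ γ₁ γ₂) γ₁ (Iic τ) := fun _ hs => if_pos hs

theorem concatAt_eqOn_Ici (hend : γ₁ τ = γ₂ 0) :
    EqOn (concatAt τ γ₁ γ₂) (fun s => γ₂ (s - τ)) (Ici τ) := by
  intro s hs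
  rcases (mem_Ici.1 hs).eq_or_lt with rfl | hs
  · simp [concatAt, hend]
  · exact if_neg (not_le.2 hs)

theorem PiecewiseC1On.concatAt (h₁ : PiecewiseC1On γ₁ 0 τ) (h₂ : PiecewiseC1On γ₂ 0 σ)
    (hend : γ₁ τ = γ₂ 0) : PiecewiseC1On (concatAt τ γ₁ γ₂) 0 (τ + σ) := by
  have h₂' : PiecewiseC1On (fun s => γ₂ (s - τ)) τ (τ + σ) := by
    simpa [sub_eq_add_neg, add_comm] using h₂.comp_add_const (-τ)
  exact (h₁.congr (concatAt_eqOn_Iic.symm.mono Icc_subset_Iic_self)).trans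
    (h₂'.congr ((concatAt_eqOn_Ici hend).symm.mono Icc_subset_Ici_self))

theorem actionA_concatAt (hL : Continuous (uncurry La)) (h₁ : PiecewiseC1On γ₁ 0 τ)
    (h₂ : PiecewiseC1On γ₂ 0 σ) (hend : γ₁ τ = γ₂ 0) :
    actionA La (concatAt τ γ₁ γ₂) 0 (τ + σ) = actionA La γ₁ 0 τ + actionA La γ₂ 0 σ := by
  have hτ := h₁.le
  have hσ := h₂.le
  have h := h₁.concatAt h₂ hend
  rw [← actionA_add hL (h.mono le_rfl hτ (by linarith)) (h.mono hτ (by linarith) le_rfl),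
    actionA_congr hτ (concatAt_eqOn_Iic.mono (Ioo_subset_Icc_self.trans Icc_subset_Iic_self)),
    actionA_congr (by linarith)
      ((concatAt_eqOn_Ici hend).mono (Ioo_subset_Icc_self.trans Icc_subset_Ici_self))]
  simp [sub_eq_add_neg, actionA_comp_add_const]

end Concat

theorem IsZdPeriodic.exists_forall_le {u : Ed d → ℝ} (hper : IsZdPeriodic u) (hu : Continuous u) :
    ∃ z, ∀ x, u z ≤ u x := by
  let e := (EuclideanSpace.equiv (Fin d) ℝ).symm
  have hK : IsCompact (e '' univ.pi fun _ => Icc (0 : ℝ) 1) :=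
    (isCompact_univ_pi fun _ => isCompact_Icc).image e.continuous
  obtain ⟨z, -, hz⟩ := hK.exists_isMinOn ⟨e 0, 0, fun _ _ => ⟨le_rfl, zero_le_one⟩, rfl⟩
    hu.continuousOn
  refine ⟨z, fun x => ?_⟩
  have hx : x = e (fun i => Int.fract (x i)) + intVec d fun i => ⌊x i⌋ :=
    PiLp.ext fun i => (Int.fract_add_floor (x i)).symm
  rw [hx, hper]
  exact hz ⟨_, fun i _ => ⟨Int.fract_nonneg _, (Int.fract_lt_one _).le⟩, rfl⟩

theorem TonelliAut.exists_neg_le {La : Ed d → Ed d → ℝ} (h : TonelliAut La) :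
    ∃ B, 0 ≤ B ∧ ∀ x v, -B ≤ La x v := by
  obtain ⟨B, hB⟩ := h.2.2.2 0 le_rfl
  exact ⟨max B 0, le_max_right B 0, fun x v => by linarith [hB x v, le_max_left B 0]⟩

section LaxOleinik

variable {La : Ed d → Ed d → ℝ} {B m : ℝ} {w : Ed d → ℝ} {γ : ℝ → Ed d} {σ t c : ℝ} {x : Ed d}

theorem sub_mul_le_add_actionA (hB : 0 ≤ B) (hL : ∀ x v, -B ≤ La x v) (hw : ∀ y, m ≤ w y)
    (hγ : PiecewiseC1On γ 0 σ) : m - B * σ ≤ w (γ 0) + actionA La γ 0 σ := by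
  linarith [hw (γ 0), neg_mul_le_actionA hB hL hγ.le (γ := γ)]

theorem le_LOa_of_forall (hσ : 0 ≤ σ)
    (h : ∀ γ, PiecewiseC1On γ 0 σ → γ σ = x → c ≤ w (γ 0) + actionA La γ 0 σ) :
    c ≤ LOa La w σ x := by
  rcases hσ.eq_or_lt with rfl | hσ
  · simpa [LOa, actionA] using h _ (piecewiseC1On_const x le_rfl) rfl
  rw [LOa, if_neg hσ.ne']
  refine le_csInf ⟨_, _, piecewiseC1On_const x hσ.le, rfl, rfl⟩ ?_
  rintro _ ⟨γ, hγ, hγx, rfl⟩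
  exact h γ hγ hγx

theorem sub_mul_le_LOa (hB : 0 ≤ B) (hL : ∀ x v, -B ≤ La x v) (hw : ∀ y, m ≤ w y) (hσ : 0 ≤ σ)
    (x : Ed d) : m - B * σ ≤ LOa La w σ x :=
  le_LOa_of_forall hσ fun _ hγ _ => sub_mul_le_add_actionA hB hL hw hγ

theorem LOa_le_add_actionA (hB : 0 ≤ B) (hL : ∀ x v, -B ≤ La x v) (hw : ∀ y, m ≤ w y) {a : ℝ}
    (hγ : PiecewiseC1On γ a (a + σ)) :
    LOa La w σ (γ (a + σ)) ≤ w (γ a) + actionA La γ a (a + σ) := by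
  rcases eq_or_ne σ 0 with rfl | hσ
  · simp [LOa, actionA]
  have hγ' : PiecewiseC1On (fun s => γ (s + a)) 0 σ := by
    simpa using hγ.comp_add_const a
  rw [LOa, if_neg hσ]
  refine csInf_le ⟨m - B * σ, ?_⟩
    ⟨_, hγ', by rw [add_comm], by rw [actionA_comp_add_const, zero_add, add_comm σ]⟩
  rintro _ ⟨η, hη, -, rfl⟩
  exact sub_mul_le_add_actionA hB hL hw hη

theorem LOa_add_le_add_actionA (hLc : Continuous (uncurry La)) (hB : 0 ≤ B)
    (hL : ∀ x v, -B ≤ La x v) (hw : ∀ y, m ≤ w y) {τ : ℝ} (hτ : 0 ≤ τ)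
    (hγ : PiecewiseC1On γ 0 σ) :
    LOa La w (τ + σ) (γ σ) ≤ LOa La w τ (γ 0) + actionA La γ 0 σ := by
  suffices LOa La w (τ + σ) (γ σ) - actionA La γ 0 σ ≤ LOa La w τ (γ 0) by linarith
  refine le_LOa_of_forall hτ fun γ₁ hγ₁ hend => ?_
  have hstart : concatAt τ γ₁ γ 0 = γ₁ 0 := concatAt_eqOn_Iic (show (0 : ℝ) ≤ τ from hτ)
  have hstop : concatAt τ γ₁ γ (τ + σ) = γ σ := by
    rw [concatAt_eqOn_Ici hend (show τ ≤ τ + σ by linarith [hγ.le])]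
    simp
  have := LOa_le_add_actionA hB hL hw (a := 0) (by rw [zero_add]; exact hγ₁.concatAt hγ hend)
  rw [zero_add, hstart, hstop, actionA_concatAt hLc hγ₁ hγ hend] at this
  linarith

theorem le_LOnew_of_forall (ht : 0 ≤ t) (h : ∀ σ, t ≤ σ → σ ≤ 2 * t → c ≤ LOa La w σ x) :
    c ≤ LOnew La w t x :=
  le_csInf ⟨_, t, le_rfl, by linarith, rfl⟩ fun _ ⟨σ, h₁, h₂, hr⟩ => hr ▸ h σ h₁ h₂

theorem sub_mul_le_LOnew (hB : 0 ≤ B) (hL : ∀ x v, -B ≤ La x v) (hw : ∀ y, m ≤ w y) (ht : 0 ≤ t)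
    (x : Ed d) : m - B * (2 * t) ≤ LOnew La w t x :=
  le_LOnew_of_forall ht fun σ h₁ h₂ => (sub_mul_le_LOa hB hL hw (ht.trans h₁) x).trans'
    (by nlinarith)

theorem LOnew_le_LOa (hB : 0 ≤ B) (hL : ∀ x v, -B ≤ La x v) (hw : ∀ y, m ≤ w y)
    (h₁ : t ≤ σ) (h₂ : σ ≤ 2 * t) (x : Ed d) : LOnew La w t x ≤ LOa La w σ x := by
  have ht : 0 ≤ t := by linarith
  refine csInf_le ⟨m - B * (2 * t), ?_⟩ ⟨σ, h₁, h₂, rfl⟩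
  rintro _ ⟨τ, hτ₁, hτ₂, rfl⟩
  exact (sub_mul_le_LOa hB hL hw (ht.trans hτ₁) x).trans' (by nlinarith)

theorem LOnew_add_le_LOa_LOnew (hLc : Continuous (uncurry La)) (hB : 0 ≤ B)
    (hL : ∀ x v, -B ≤ La x v) (hw : ∀ y, m ≤ w y) {s : ℝ} (hs : 0 ≤ s) (h₁ : t ≤ σ)
    (h₂ : σ ≤ 2 * t) (x : Ed d) : LOnew La w (t + s) x ≤ LOa La (LOnew La w s) σ x := by
  refine le_LOa_of_forall (by linarith) fun γ hγ hγx => ?_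
  suffices LOnew La w (t + s) x - actionA La γ 0 σ ≤ LOnew La w s (γ 0) by linarith
  refine le_LOnew_of_forall hs fun τ hτ₁ hτ₂ => ?_
  have hsplit := LOa_add_le_add_actionA hLc hB hL hw (τ := τ) (by linarith) hγ
  rw [hγx] at hsplit
  linarith [LOnew_le_LOa hB hL hw (t := t + s) (σ := τ + σ) (by linarith) (by linarith) x]

theorem LOa_LOnew_le_LOa_add (hLc : Continuous (uncurry La)) (hB : 0 ≤ B)
    (hL : ∀ x v, -B ≤ La x v) (hw : ∀ y, m ≤ w y) {s τ : ℝ} (h₁ : s ≤ τ) (h₂ : τ ≤ 2 * s)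
    (hσ : 0 ≤ σ) (x : Ed d) : LOa La (LOnew La w s) σ x ≤ LOa La w (τ + σ) x := by
  have hs : 0 ≤ s := by linarith
  refine le_LOa_of_forall (by linarith) fun γ hγ hγx => ?_
  have hγ₁ : PiecewiseC1On γ 0 τ := hγ.mono le_rfl (by linarith) (by linarith)
  have hγ₂ : PiecewiseC1On γ τ (τ + σ) := hγ.mono (by linarith) (by linarith) le_rfl
  have hg := sub_mul_le_LOnew hB hL hw hs
  calc LOa La (LOnew La w s) σ x
      _ ≤ LOnew La w s (γ τ) + actionA La γ τ (τ + σ) := hγx ▸ LOa_le_add_actionA hB hL hg hγ₂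
      _ ≤ LOa La w τ (γ τ) + actionA La γ τ (τ + σ) := by
        gcongr; exact LOnew_le_LOa hB hL hw h₁ h₂ _
      _ ≤ w (γ 0) + actionA La γ 0 τ + actionA La γ τ (τ + σ) := by
        gcongr; simpa using LOa_le_add_actionA hB hL hw (a := 0) (by simpa using hγ₁)
      _ = w (γ 0) + actionA La γ 0 (τ + σ) := by rw [add_assoc, actionA_add hLc hγ₁ hγ₂]

end LaxOleinik

theorem exists_add_eq_of_le_of_le {t s ρ : ℝ} (ht : 0 ≤ t) (hs : 0 ≤ s) (h₁ : t + s ≤ ρ)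
    (h₂ : ρ ≤ 2 * (t + s)) : ∃ τ σ, s ≤ τ ∧ τ ≤ 2 * s ∧ t ≤ σ ∧ σ ≤ 2 * t ∧ ρ = τ + σ := by
  refine ⟨ρ - min (2 * t) (ρ - s), min (2 * t) (ρ - s), ?_, ?_, le_min (by linarith) (by linarith),
    min_le_left _ _, by ring⟩
  · linarith [min_le_right (2 * t) (ρ - s)]
  · linarith [le_min (show ρ - 2 * s ≤ 2 * t by linarith) (show ρ - 2 * s ≤ ρ - s by linarith)]

theorem LOnew_semigroup_general
    {d : ℕ} (La : Ed d → Ed d → ℝ) (hLa : TonelliAut La)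
    (u : Ed d → ℝ) (hu : Continuous u) (huper : IsZdPeriodic u)
    (t s : ℝ) (ht : 0 ≤ t) (hs : 0 ≤ s) :
    ∀ x : Ed d, LOnew La u (t + s) x = LOnew La (fun y => LOnew La u s y) t x := by
  intro x
  have hLc : Continuous (uncurry La) := hLa.1.continuous
  obtain ⟨B, hB, hL⟩ := hLa.exists_neg_le
  obtain ⟨z, hz⟩ := huper.exists_forall_le hu
  apply le_antisymm
  · exact le_LOnew_of_forall ht fun σ h₁ h₂ => LOnew_add_le_LOa_LOnew hLc hB hL hz hs h₁ h₂ x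
  · refine le_LOnew_of_forall (by linarith) fun ρ h₁ h₂ => ?_
    obtain ⟨τ, σ, hτ₁, hτ₂, hσ₁, hσ₂, rfl⟩ := exists_add_eq_of_le_of_le ht hs h₁ h₂
    calc LOnew La (LOnew La u s) t x
        _ ≤ LOa La (LOnew La u s) σ x := LOnew_le_LOa hB hL (sub_mul_le_LOnew hB hL hz hs) hσ₁ hσ₂ x
        _ ≤ LOa La u (τ + σ) x := LOa_LOnew_le_LOa_add hLc hB hL hz hτ₁ hτ₂ (by linarith) x

/-- the new Lax–Oleinik operators form a one-parameter semigroup: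
`T̃ᵃ_{t+s} u = T̃ᵃ_t (T̃ᵃ_s u)` for all `t, s ≥ 0`. -/
theorem LOnew_semigroup
    {d : ℕ} (hd : 1 ≤ d) (La : Ed d → Ed d → ℝ) (hLa : TonelliAut La)
    (u : Ed d → ℝ) (hu : Continuous u) (huper : IsZdPeriodic u)
    (t s : ℝ) (ht : 0 ≤ t) (hs : 0 ≤ s) :
    ∀ x : Ed d, LOnew La u (t + s) x = LOnew La (fun y => LOnew La u s y) t x :=
  LOnew_semigroup_general La hLa u hu huper t s ht hs
end
end

section
/- There exist a continuous ℤ^d-periodic function u : ℝ^d → ℝ with min_{y ∈ ℝ^d} u(y) = 0, a point x⁰ ∈ ℝ^d, a constant c > 0, and a sequence t_m → +∞ such that T^a_{t_m} u(x⁰) ≥ c / t_m for every m. (Hence, since T^a_t u converges to 0, the O(1/t) convergence rate of the Lax–Oleinik semigroup for this class of Lagrangians is sharp in the sense of order.) -/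
open Set Filter

noncomputable section

/-!
Take `u = dist(·, ℤ^d)` and `x⁰ = 0`. Integrating the Fenchel–Young inequality
`⟪w, v - ω⟫ - ‖w‖² / 2 ≤ ‖v - ω‖² / 2` along a piecewise `C¹` curve from `p` to `0` in time `t`,
with the best `w`, bounds its action below by `‖p + tω‖² / (2t)`. Since `ℤ^d` is `1`-separated
and `‖ω‖ = 1`, of any two times `1/2` apart one, `t`, has `dist(-tω, ℤ^d) ≥ 1/4`. For such `t`,
`u(p) ≥ 1/4 - ‖p + tω‖`, and minimising `u(p) + ‖p + tω‖² / (2t)` over `‖p + tω‖` gives at least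
`(1/4)² / (2t)`.
-/

open MeasureTheory intervalIntegral RealInnerProductSpace Metric

theorem IntervalIntegrable.of_partition {E : Type*} [NormedAddCommGroup E] {f : ℝ → E} {n : ℕ}
    {T : Fin (n + 1) → ℝ}
    (hf : ∀ i : Fin n, IntervalIntegrable f volume (T i.castSucc) (T i.succ)) :
    IntervalIntegrable f volume (T 0) (T (Fin.last n)) := by
  induction n with
  | zero => exact IntervalIntegrable.refl
  | succ n ih =>
    have hinit := ih (T := T ∘ Fin.castSucc) fun i => by simpa using hf i.castSucc
    simpa using hinit.trans (hf (Fin.last n))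

theorem intervalIntegral.integral_eq_sub_of_partition {E : Type*} [NormedAddCommGroup E]
    [NormedSpace ℝ E] [CompleteSpace E] {f g : ℝ → E} {n : ℕ} {T : Fin (n + 1) → ℝ}
    (hf : ∀ i : Fin n, IntervalIntegrable f volume (T i.castSucc) (T i.succ))
    (hg : ∀ i : Fin n, ∫ x in T i.castSucc..T i.succ, f x = g (T i.succ) - g (T i.castSucc)) :
    ∫ x in T 0..T (Fin.last n), f x = g (T (Fin.last n)) - g (T 0) := by
  induction n with
  | zero => simp
  | succ n ih =>
    have hf' : ∀ i : Fin n, IntervalIntegrable f volume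
        ((T ∘ Fin.castSucc) i.castSucc) ((T ∘ Fin.castSucc) i.succ) :=
      fun i => by simpa using hf i.castSucc
    have hinit := ih hf' fun i => by simpa using hg i.castSucc
    have hint := IntervalIntegrable.of_partition hf'
    simp only [Function.comp_apply, Fin.castSucc_zero] at hinit hint
    rw [← Fin.succ_last, ← integral_add_adjacent_intervals hint (hf (Fin.last n)), hinit,
      hg (Fin.last n)]
    abel

section PieceC1

variable {E F : Type*} [NormedAddCommGroup E] [NormedSpace ℝ E] [NormedAddCommGroup F]
  {γ : ℝ → E} {a b : ℝ}

theorem ContDiffOn.intervalIntegrable_comp_deriv (hγ : ContDiffOn ℝ 1 γ (Icc a b))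
    (hab : a ≤ b) {Φ : E → F} (hΦ : Continuous Φ) :
    IntervalIntegrable (fun s => Φ (deriv γ s)) volume a b := by
  rcases hab.eq_or_lt with rfl | hab
  · exact IntervalIntegrable.refl
  have hcont : ContinuousOn (fun s => Φ (derivWithin γ (Icc a b) s)) (Icc a b) :=
    hΦ.comp_continuousOn (hγ.continuousOn_derivWithin (uniqueDiffOn_Icc hab) le_rfl)
  rw [intervalIntegrable_iff_integrableOn_Ioo_of_le hab.le]
  refine ((hcont.integrableOn_compact isCompact_Icc).mono_set Ioo_subset_Icc_self).congr_fun
    (fun s hs => ?_) measurableSet_Ioo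
  simp only [derivWithin_of_mem_nhds (Icc_mem_nhds hs.1 hs.2)]

theorem ContDiffOn.integral_deriv_eq_sub [CompleteSpace E] (hγ : ContDiffOn ℝ 1 γ (Icc a b))
    (hab : a ≤ b) : ∫ s in a..b, deriv γ s = γ b - γ a := by
  refine integral_eq_sub_of_hasDerivAt_of_le hab hγ.continuousOn (fun s hs => ?_)
    (hγ.intervalIntegrable_comp_deriv hab continuous_id)
  exact ((hγ.differentiableOn one_ne_zero s (Ioo_subset_Icc_self hs)).differentiableAt
    (Icc_mem_nhds hs.1 hs.2)).hasDerivAt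

end PieceC1

namespace PiecewiseC1On

variable {d : ℕ} {γ : ℝ → Ed d} {a b : ℝ}

theorem of_contDiffOn (hγ : ContDiffOn ℝ 1 γ (Icc a b)) (hab : a ≤ b) : PiecewiseC1On γ a b :=
  ⟨hγ.continuousOn, 1, ![a, b], rfl, rfl,
    Fin.monotone_iff_le_succ.2 fun i => by fin_cases i; simpa using hab,
    fun i => by fin_cases i; simpa using hγ⟩

theorem intervalIntegrable_comp_deriv (hγ : PiecewiseC1On γ a b) {F : Type*}
    [NormedAddCommGroup F] {Φ : Ed d → F} (hΦ : Continuous Φ) :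
    IntervalIntegrable (fun s => Φ (deriv γ s)) volume a b := by
  obtain ⟨-, n, T, rfl, rfl, hT, hpiece⟩ := hγ
  exact IntervalIntegrable.of_partition fun i =>
    (hpiece i).intervalIntegrable_comp_deriv (hT i.castSucc_le_succ) hΦ

theorem integral_deriv_eq_sub (hγ : PiecewiseC1On γ a b) :
    ∫ s in a..b, deriv γ s = γ b - γ a := by
  obtain ⟨-, n, T, rfl, rfl, hT, hpiece⟩ := hγ
  exact integral_eq_sub_of_partition
    (fun i => (hpiece i).intervalIntegrable_comp_deriv (hT i.castSucc_le_succ) continuous_id)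
    fun i => (hpiece i).integral_deriv_eq_sub (hT i.castSucc_le_succ)

theorem sq_norm_div_le_actionA (hγ : PiecewiseC1On γ a b) (hab : a < b) (ω : Ed d) :
    ‖γ b - γ a - (b - a) • ω‖ ^ 2 / (2 * (b - a)) ≤
      actionA (fun _ v => (1 / 2 : ℝ) * ‖v - ω‖ ^ 2) γ a b := by
  set z := γ b - γ a - (b - a) • ω
  set w := (b - a)⁻¹ • z
  have hdisp : IntervalIntegrable (fun s => deriv γ s - ω) volume a b :=
    hγ.intervalIntegrable_comp_deriv (continuous_sub_right ω)
  have hpair_int : IntervalIntegrable (fun s => ⟪w, deriv γ s - ω⟫) volume a b :=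
    hγ.intervalIntegrable_comp_deriv (Φ := fun v => ⟪w, v - ω⟫) (by fun_prop)
  have hpair : ∫ s in a..b, ⟪w, deriv γ s - ω⟫ = ⟪w, z⟫ := by
    have hcomm := (innerSL ℝ w).intervalIntegral_comp_comm hdisp
    simp only [innerSL_apply_apply] at hcomm
    rw [hcomm, integral_sub (f := deriv γ) (hγ.intervalIntegrable_comp_deriv continuous_id)
      intervalIntegrable_const, hγ.integral_deriv_eq_sub, intervalIntegral.integral_const]
  have hyoung : ∀ v : Ed d, ⟪w, v⟫ - 1 / 2 * ‖w‖ ^ 2 ≤ 1 / 2 * ‖v‖ ^ 2 := fun v => by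
    linarith [norm_sub_sq_real w v, sq_nonneg ‖w - v‖]
  calc ‖z‖ ^ 2 / (2 * (b - a)) = ⟪w, z⟫ - (b - a) * (1 / 2 * ‖w‖ ^ 2) := by
        rw [real_inner_smul_left, real_inner_self_eq_norm_sq, norm_smul, mul_pow,
          Real.norm_eq_abs, sq_abs]
        field_simp
        ring
    _ = ∫ s in a..b, (⟪w, deriv γ s - ω⟫ - 1 / 2 * ‖w‖ ^ 2) := by
        rw [integral_sub hpair_int intervalIntegrable_const, hpair, intervalIntegral.integral_const,
          smul_eq_mul]
    _ ≤ actionA (fun _ v => (1 / 2 : ℝ) * ‖v - ω‖ ^ 2) γ a b :=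
        integral_mono_on hab.le (hpair_int.sub intervalIntegrable_const)
          (hγ.intervalIntegrable_comp_deriv (Φ := fun v => 1 / 2 * ‖v - ω‖ ^ 2) (by fun_prop))
          fun s _ => hyoung _

end PiecewiseC1On

theorem le_LOa_of_forall_le {d : ℕ} {ω x : Ed d} {u : Ed d → ℝ} {t c : ℝ} (ht : 0 < t)
    (h : ∀ p, c ≤ u p + ‖x - p - t • ω‖ ^ 2 / (2 * t)) :
    c ≤ LOa (fun _ v => (1 / 2 : ℝ) * ‖v - ω‖ ^ 2) u t x := by
  rw [LOa, if_neg ht.ne']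
  refine le_csInf ⟨_, fun _ => x, .of_contDiffOn contDiffOn_const ht.le, rfl, rfl⟩ ?_
  rintro r ⟨γ, hγ, rfl, rfl⟩
  have haction := hγ.sq_norm_div_le_actionA ht ω
  rw [sub_zero] at haction
  linarith [h (γ 0)]

section Lattice

variable {d : ℕ}

theorem intVec_add (p q : Fin d → ℤ) : intVec d (p + q) = intVec d p + intVec d q := by
  ext i
  simp [intVec]

theorem intVec_zero : intVec d 0 = 0 := by
  ext i
  simp [intVec]

theorem infDist_add_intVec (x : Ed d) (k : Fin d → ℤ) :
    infDist (x + intVec d k) (range (intVec d)) = infDist x (range (intVec d)) := by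
  have hrange : (· + intVec d k) '' range (intVec d) = range (intVec d) := by
    rw [← range_comp, ← (add_right_surjective k).range_comp (intVec d)]
    congr 1
    funext p
    simp [intVec_add]
  simpa [hrange] using infDist_image (x := x) (t := range (intVec d))
    (isometry_add_right (intVec d k))

theorem one_le_dist_intVec {p q : Fin d → ℤ} (h : p ≠ q) :
    1 ≤ dist (intVec d p) (intVec d q) := by
  obtain ⟨i, hi⟩ := Function.ne_iff.mp h
  calc (1 : ℝ) ≤ |(p i : ℝ) - q i| := by exact_mod_cast Int.one_le_abs (sub_ne_zero.2 hi)
    _ = dist (intVec d p i) (intVec d q i) := by simp [intVec, Real.dist_eq]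
    _ ≤ dist (intVec d p) (intVec d q) := PiLp.dist_apply_le _ _ i

theorem pairwise_one_le_dist_intVec : (range (intVec d)).Pairwise (1 ≤ dist · ·) := by
  rintro _ ⟨p, rfl⟩ _ ⟨q, rfl⟩ hne
  exact one_le_dist_intVec fun h => hne (h ▸ rfl)

end Lattice

theorem quarter_le_infDist_or_of_dist_eq_half {X : Type*} [MetricSpace X] {S : Set X}
    (hne : S.Nonempty) (hsep : S.Pairwise (1 ≤ dist · ·)) {x y : X} (hxy : dist x y = 1 / 2) :
    1 / 4 ≤ infDist x S ∨ 1 / 4 ≤ infDist y S := by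
  by_contra! h
  obtain ⟨p, hp, hxp⟩ := (infDist_lt_iff hne).1 h.1
  obtain ⟨q, hq, hyq⟩ := (infDist_lt_iff hne).1 h.2
  have hpq : dist p q < 1 := by
    linarith [dist_triangle4 p x y q, dist_comm p x]
  obtain rfl : p = q := by_contra fun hpq' => (hsep hp hq hpq').not_gt hpq
  linarith [dist_triangle x p y, dist_comm p y]

theorem sq_div_le_add_sq_div {D u s t : ℝ} (hD : 0 < D) (hDt : D ≤ t) (hu : 0 ≤ u)
    (h : D ≤ u + s) : D ^ 2 / (2 * t) ≤ u + s ^ 2 / (2 * t) := by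
  have ht : 0 < 2 * t := by linarith
  have hexpand : (u + s ^ 2 / (2 * t)) * (2 * t) = 2 * t * u + s ^ 2 := by
    rw [add_mul, div_mul_cancel₀ _ ht.ne']
    ring
  rw [div_le_iff₀ ht, hexpand]
  rcases le_total D s with hs | hs
  · nlinarith
  · nlinarith [mul_nonneg (sub_nonneg.2 hs) (by linarith : 0 ≤ 2 * t - D - s)]

theorem exists_ge_quarter_le_infDist_neg_smul {d : ℕ} {ω : Ed d} (hω : ‖ω‖ = 1) (s : ℝ) :
    ∃ t, s ≤ t ∧ 1 / 4 ≤ infDist (-(t • ω)) (range (intVec d)) := by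
  have hhalf : dist (-(s • ω)) (-((s + 1 / 2) • ω)) = 1 / 2 := by
    rw [dist_neg_neg, dist_eq_norm, ← sub_smul, norm_smul, hω]
    norm_num
  rcases quarter_le_infDist_or_of_dist_eq_half (S := range (intVec d)) ⟨0, 0, intVec_zero⟩
    pairwise_one_le_dist_intVec hhalf with h | h
  exacts [⟨s, le_rfl, h⟩, ⟨s + 1 / 2, by linarith, h⟩]

theorem LOa_rate_sharp_general
    {d : ℕ} (ω : Ed d) (hω : ‖ω‖ = 1) :
    ∃ u : Ed d → ℝ, Continuous u ∧ IsZdPeriodic u ∧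
      (∀ y : Ed d, 0 ≤ u y) ∧ (∃ y : Ed d, u y = 0) ∧
      ∃ (x0 : Ed d) (c : ℝ), 0 < c ∧ ∃ tm : ℕ → ℝ,
        Filter.Tendsto tm Filter.atTop Filter.atTop ∧
        ∀ m : ℕ, c / tm m ≤
          LOa (fun _x v => (1 / 2 : ℝ) * ‖v - ω‖ ^ 2) u (tm m) x0 := by
  set L := range (intVec d)
  choose tm htm hfar using fun m : ℕ => exists_ge_quarter_le_infDist_neg_smul hω ((m : ℝ) + 1)
  refine ⟨(infDist · L), continuous_infDist_pt L, infDist_add_intVec,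
    fun _ => infDist_nonneg, ⟨0, infDist_zero_of_mem ⟨0, intVec_zero⟩⟩, 0, 1 / 32, by norm_num,
    tm, tendsto_atTop_mono htm (tendsto_atTop_add_const_right _ 1 tendsto_natCast_atTop_atTop),
    fun m => ?_⟩
  have ht : 1 ≤ tm m := by linarith [htm m, m.cast_nonneg (α := ℝ)]
  refine le_LOa_of_forall_le (by linarith) fun p => ?_
  have hnear : 1 / 4 ≤ infDist p L + ‖0 - p - tm m • ω‖ := by
    have htri := infDist_le_infDist_add_dist (s := L) (x := -(tm m • ω)) (y := p)
    rw [dist_eq_norm, show -(tm m • ω) - p = 0 - p - tm m • ω by abel] at htri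
    linarith [hfar m]
  calc 1 / 32 / tm m = (1 / 4) ^ 2 / (2 * tm m) := by ring
    _ ≤ _ := sq_div_le_add_sq_div (by norm_num) (by linarith) infDist_nonneg hnear

/-- for the integrable Lagrangian `L̄(x,v) = ½‖v − ω‖²` there are a
continuous `ℤ^d`-periodic `u` with `min u = 0`, a point `x⁰`, a constant `c > 0` and
times `t_m → +∞` with `Tᵃ_{t_m} u (x⁰) ≥ c / t_m`: the `O(1/t)` rate is sharp. -/
theorem LOa_rate_sharp
    {d : ℕ} (hd : 1 ≤ d) (ω : Ed d) (hω : ‖ω‖ = 1) :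
    ∃ u : Ed d → ℝ, Continuous u ∧ IsZdPeriodic u ∧
      (∀ y : Ed d, 0 ≤ u y) ∧ (∃ y : Ed d, u y = 0) ∧
      ∃ (x0 : Ed d) (c : ℝ), 0 < c ∧ ∃ tm : ℕ → ℝ,
        Filter.Tendsto tm Filter.atTop Filter.atTop ∧
        ∀ m : ℕ, c / tm m ≤
          LOa (fun _x v => (1 / 2 : ℝ) * ‖v - ω‖ ^ 2) u (tm m) x0 :=
  LOa_rate_sharp_general ω hω
end
end
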